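/- arXiv:1910.01222 — 8 statements merged into one kernel-verified Lean document; each statement's English description precedes it below -/
import Mathlib

section
/- Let R be a ring, let M be an R-module, and let M be the internal direct sum of a family of submodules (M_i)_{i∈I}. Then the endomorphism ring End_R(M) is centrally essential if and only if for every i ∈ I: (1) M_i is a fully invariant submodule of M, and (2) the ring End_R(M_i) is centrally essential. -/
/-!
In a centrally essential ring every idempotent `e` is central: `b = e * f * (1 - e)` satisfies
`e * b = b` and `b * e = 0`, so a nonzero central multiple `y = b * x` would give
`y = e * y = y * e = 0`. Applied to the projection onto a direct summand, this makes every direct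
summand of `M` fully invariant. Once all summands are fully invariant, `End M ≃+* Π i, End Mᵢ`,
and a product of rings is centrally essential iff each factor is.
-/

/-- A ring `R` is centrally essential if for every nonzero `a : R` there exist
nonzero central elements `x, y` with `a * x = y`. -/
def IsCentrallyEssential (R : Type*) [Ring R] : Prop :=
  ∀ a : R, a ≠ 0 → ∃ x y : R, x ∈ Set.center R ∧ y ∈ Set.center R ∧
    x ≠ 0 ∧ y ≠ 0 ∧ a * x = y

namespace IsCentrallyEssential

variable {R S : Type*} [Ring R] [Ring S]

theorem of_ringEquiv (hR : IsCentrallyEssential R) (e : R ≃+* S) : IsCentrallyEssential S := by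
  intro a ha
  obtain ⟨x, y, hx, hy, hx0, hy0, hxy⟩ := hR (e.symm a) (by simpa using ha)
  refine ⟨e x, e y, (MulEquivClass.apply_mem_center_iff e).2 hx,
    (MulEquivClass.apply_mem_center_iff e).2 hy, by simpa using hx0, by simpa using hy0, ?_⟩
  rw [← hxy, map_mul, RingEquiv.apply_symm_apply]

theorem pi_iff {ι : Type*} {A : ι → Type*} [∀ i, Ring (A i)] :
    IsCentrallyEssential (Π i, A i) ↔ ∀ i, IsCentrallyEssential (A i) := by
  classical
  have single_mem_center {i : ι} {z : A i} (hz : z ∈ Set.center (A i)) :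
      Pi.single i z ∈ Set.center (Π i, A i) := by
    rw [Set.center_pi]
    intro j _
    rcases eq_or_ne j i with rfl | hj
    · simpa using hz
    · simp [hj, Set.zero_mem_center]
  constructor
  · intro hA i a ha
    obtain ⟨x, y, hx, hy, -, hy0, hxy⟩ := hA (Pi.single i a) (by simpa using ha)
    rw [Set.center_pi] at hx hy
    rw [← Pi.single_mul_left] at hxy
    have hax : a * x i ≠ 0 := by rintro h; exact hy0 (by rw [← hxy, h, Pi.single_zero])
    refine ⟨x i, y i, hx i trivial, hy i trivial, right_ne_zero_of_mul hax, ?_, ?_⟩ <;>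
      simp [← hxy, hax]
  · intro hA a ha
    obtain ⟨i, hi⟩ := Function.ne_iff.1 ha
    obtain ⟨x, y, hx, hy, hx0, hy0, hxy⟩ := hA i (a i) hi
    exact ⟨Pi.single i x, Pi.single i y, single_mem_center hx, single_mem_center hy,
      by simpa using hx0, by simpa using hy0, by rw [← Pi.single_mul_right, hxy]⟩

theorem eq_zero_of_mul_eq_self_of_mul_eq_zero (hR : IsCentrallyEssential R) {e b : R}
    (heb : e * b = b) (hbe : b * e = 0) : b = 0 := by
  by_contra hb
  obtain ⟨x, y, hx, hy, -, hy0, rfl⟩ := hR b hb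
  rw [Semigroup.mem_center_iff] at hx hy
  apply hy0
  calc b * x = e * (b * x) := by rw [← mul_assoc, heb]
    _ = b * x * e := hy e
    _ = 0 := by rw [mul_assoc, ← hx e, ← mul_assoc, hbe, zero_mul]

theorem mul_mul_one_sub_eq_zero (hR : IsCentrallyEssential R) {e : R} (he : IsIdempotentElem e)
    (f : R) : e * f * (1 - e) = 0 :=
  hR.eq_zero_of_mul_eq_self_of_mul_eq_zero (e := e)
    (by rw [← mul_assoc, ← mul_assoc, he.eq])
    (by rw [mul_assoc, he.one_sub_mul_self, mul_zero])

theorem mem_center_of_isIdempotentElem (hR : IsCentrallyEssential R) {e : R}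
    (he : IsIdempotentElem e) : e ∈ Set.center R := by
  refine Semigroup.mem_center_iff.2 fun f => ?_
  have h₁ := hR.mul_mul_one_sub_eq_zero he f
  have h₂ := hR.mul_mul_one_sub_eq_zero he.one_sub f
  rw [sub_sub_cancel, sub_mul, one_mul, sub_mul, sub_eq_zero] at h₂
  rw [mul_sub, mul_one, sub_eq_zero] at h₁
  rw [h₂, ← h₁]

theorem isFullyInvariant_of_isCompl {M : Type*} [AddCommGroup M] [Module R M]
    (hM : IsCentrallyEssential (Module.End R M)) {p q : Submodule R M} (hpq : IsCompl p q) :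
    p.IsFullyInvariant := fun f => by
  have he := p.isIdempotentElem_projection hpq
  have hcomm : Commute (p.projection q hpq) f :=
    (Semigroup.mem_center_iff.1 (hM.mem_center_of_isIdempotentElem he) f).symm
  simpa [Module.End.mem_invtSubmodule] using
    ((LinearMap.IsIdempotentElem.commute_iff he).1 hcomm).1

end IsCentrallyEssential

theorem iSupIndep.isCompl_iSup_ne {α ι : Type*} [CompleteLattice α] {f : ι → α}
    (hf : iSupIndep f) (htop : ⨆ i, f i = ⊤) (i : ι) : IsCompl (f i) (⨆ (j) (_ : j ≠ i), f j) :=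
  ⟨hf i, codisjoint_iff.2 (by rw [← iSup_split_single f i, htop])⟩

/-- for an internal direct sum decomposition `M = ⨁ᵢ Mᵢ`, the endomorphism
ring of `M` is centrally essential iff each `Mᵢ` is fully invariant and each `End (Mᵢ)`
is centrally essential. -/
theorem endRing_isCentrallyEssential_iff_of_isInternal
    {R : Type*} [Ring R] {M : Type*} [AddCommGroup M] [Module R M]
    {ι : Type*} [DecidableEq ι] (Mi : ι → Submodule R M)
    (h : DirectSum.IsInternal Mi) :
    IsCentrallyEssential (Module.End R M) ↔
      ∀ i : ι,
        (∀ f : Module.End R M, ∀ x ∈ Mi i, f x ∈ Mi i) ∧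
        IsCentrallyEssential (Module.End R ↥(Mi i)) := by
  have hind := h.submodule_iSupIndep
  have htop := h.submodule_iSup_eq_top
  constructor
  · intro hM
    have hinv (i : ι) : (Mi i).IsFullyInvariant :=
      hM.isFullyInvariant_of_isCompl (hind.isCompl_iSup_ne htop i)
    have hpi := IsCentrallyEssential.pi_iff.1 (hM.of_ringEquiv (hind.ringEquiv htop hinv))
    exact fun i => ⟨hinv i, hpi i⟩
  · intro H
    exact (IsCentrallyEssential.pi_iff.2 fun i => (H i).2).of_ringEquiv
      (hind.ringEquiv htop fun i => (H i).1).symm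
end

section
/- Let A be a torsion-free abelian group (n·a = 0 with n a positive integer implies a = 0), let E = End(A) be its endomorphism ring, and let ℚE = ℚ ⊗_ℤ E be its quasi-endomorphism ring. Then E is centrally essential if and only if ℚE is centrally essential. -/
/-!
Every element of `ℚ ⊗[ℤ] E` has the form `q • (1 ⊗ₜ e)`. When `E` is torsion-free, `e ↦ 1 ⊗ₜ e`
is injective, and `1 ⊗ₜ e` is central exactly when `e` is. A witness pair `(x, y)` for `a` in `E`
therefore gives the pair `(1 ⊗ₜ x, q • 1 ⊗ₜ y)` for `q • 1 ⊗ₜ a`, and conversely a witness pair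
`(q • 1 ⊗ₜ x, q • 1 ⊗ₜ a x)` for `1 ⊗ₜ a` yields `(x, a x)` after cancelling the rational scalar.
-/

open TensorProduct

lemma IsAddTorsionFree.of_nsmul_eq_zero {G : Type*} [AddCommGroup G]
    (h : ∀ (n : ℕ) (a : G), 0 < n → n • a = 0 → a = 0) : IsAddTorsionFree G where
  nsmul_right_injective n hn a b hab :=
    sub_eq_zero.1 <| h n _ (Nat.pos_of_ne_zero hn) (by rw [nsmul_sub, sub_eq_zero]; exact hab)

instance AddMonoid.End.instIsAddTorsionFree {M : Type*} [AddCommMonoid M] [IsAddTorsionFree M] :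
    IsAddTorsionFree (AddMonoid.End M) :=
  DFunLike.coe_injective.isAddTorsionFree (AddMonoidHom.coeFn M M)

lemma Set.mem_center_of_smul_mem_center {K A : Type*} [Field K] [Ring A] [Algebra K A] {q : K}
    (hq : q ≠ 0) {a : A} (h : q • a ∈ Set.center A) : a ∈ Set.center A := by
  simpa [smul_smul, inv_mul_cancel₀ hq] using Set.smul_mem_center q⁻¹ h

section RatTensor

variable {M : Type*} [AddCommGroup M]

lemma exists_eq_rat_smul_one_tmul (t : ℚ ⊗[ℤ] M) : ∃ (q : ℚ) (m : M), t = q • (1 : ℚ) ⊗ₜ[ℤ] m := by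
  obtain ⟨⟨m, s⟩, hs⟩ := IsLocalizedModule.surj (nonZeroDivisors ℤ) (TensorProduct.mk ℤ ℚ M 1) t
  have hs0 : ((s : ℤ) : ℚ) ≠ 0 := Int.cast_ne_zero.2 (nonZeroDivisors.coe_ne_zero s)
  refine ⟨((s : ℤ) : ℚ)⁻¹, m, ?_⟩
  rw [← TensorProduct.mk_apply, ← hs, Submonoid.smul_def, ← Int.cast_smul_eq_zsmul ℚ, smul_smul,
    inv_mul_cancel₀ hs0, one_smul]

variable [IsAddTorsionFree M]

lemma one_tmul_injective : Function.Injective fun m : M ↦ (1 : ℚ) ⊗ₜ[ℤ] m :=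
  (IsLocalizedModule.injective_iff_isRegular (nonZeroDivisors ℤ)
    (TensorProduct.mk ℤ ℚ M 1)).2 fun c ↦ zsmul_right_injective (nonZeroDivisors.coe_ne_zero c)

@[simp]
lemma one_tmul_eq_zero_iff {m : M} : (1 : ℚ) ⊗ₜ[ℤ] m = 0 ↔ m = 0 :=
  one_tmul_injective.eq_iff' (tmul_zero M (1 : ℚ))

end RatTensor

section Ring

variable {R : Type*} [Ring R] [IsAddTorsionFree R]

lemma one_tmul_mem_center_iff {x : R} :
    (1 : ℚ) ⊗ₜ[ℤ] x ∈ Set.center (ℚ ⊗[ℤ] R) ↔ x ∈ Set.center R := by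
  simp only [Semigroup.mem_center_iff]
  constructor
  · intro h g
    apply one_tmul_injective
    simpa only [Algebra.TensorProduct.tmul_mul_tmul, one_mul] using h (1 ⊗ₜ g)
  · intro h t
    obtain ⟨q, r, rfl⟩ := exists_eq_rat_smul_one_tmul t
    simp only [smul_mul_assoc, mul_smul_comm, Algebra.TensorProduct.tmul_mul_tmul, one_mul, h r]

theorem isCentrallyEssential_iff_rat_tensor :
    IsCentrallyEssential R ↔ IsCentrallyEssential (ℚ ⊗[ℤ] R) := by
  constructor
  · intro hR t ht
    obtain ⟨q, a, rfl⟩ := exists_eq_rat_smul_one_tmul t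
    obtain ⟨hq, ha⟩ : q ≠ 0 ∧ a ≠ 0 := by simpa using ht
    obtain ⟨x, y, hx, hy, hx0, hy0, rfl⟩ := hR a ha
    refine ⟨1 ⊗ₜ x, q • 1 ⊗ₜ (a * x), one_tmul_mem_center_iff.2 hx,
      Set.smul_mem_center q (one_tmul_mem_center_iff.2 hy), ?_, ?_, ?_⟩
    · simpa using hx0
    · simpa [hq] using hy0
    · rw [smul_mul_assoc, Algebra.TensorProduct.tmul_mul_tmul, one_mul]
  · intro hQ a ha
    obtain ⟨X, Y, hX, hY, hX0, hY0, hXY⟩ := hQ (1 ⊗ₜ a) (by simpa using ha)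
    obtain ⟨q, x, rfl⟩ := exists_eq_rat_smul_one_tmul X
    rw [mul_smul_comm, Algebra.TensorProduct.tmul_mul_tmul, one_mul] at hXY
    subst hXY
    obtain ⟨hq, hx0⟩ : q ≠ 0 ∧ x ≠ 0 := by simpa using hX0
    refine ⟨x, a * x, one_tmul_mem_center_iff.1 (Set.mem_center_of_smul_mem_center hq hX),
      one_tmul_mem_center_iff.1 (Set.mem_center_of_smul_mem_center hq hY), hx0, ?_, rfl⟩
    simpa [hq] using hY0

end Ring

/-- for a torsion-free abelian group `A`, the endomorphism ring
`E = End A` is centrally essential iff the quasi-endomorphism ring `ℚ ⊗ E` is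
centrally essential. -/
theorem isCentrallyEssential_end_iff_quasiEnd
    (A : Type*) [AddCommGroup A]
    (htf : ∀ (n : ℕ) (a : A), 0 < n → n • a = 0 → a = 0) :
    IsCentrallyEssential (AddMonoid.End A) ↔
      IsCentrallyEssential (ℚ ⊗[ℤ] AddMonoid.End A) :=
  have : IsAddTorsionFree A := .of_nsmul_eq_zero htf
  isCentrallyEssential_iff_rat_tensor
end

section
/- Let A be a strongly indecomposable torsion-free abelian group with A = PSoc(A). Then the endomorphism ring End(A) is centrally essential if and only if End(A) is commutative. -/
/-- A subgroup `B` of an abelian group `A` is pure if every equation `n • x = b` (`b ∈ B`,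
`n > 0`) solvable in `A` is solvable in `B`. -/
def IsPureSubgroup {A : Type*} [AddCommGroup A] (B : AddSubgroup A) : Prop :=
  ∀ n : ℕ, 0 < n → ∀ b ∈ B, (∃ x : A, n • x = b) → ∃ y ∈ B, n • y = b

/-- A subgroup `B` of an abelian group `A` is fully invariant if it is stable under every
endomorphism of `A`. -/
def IsFullyInvariant {A : Type*} [AddCommGroup A] (B : AddSubgroup A) : Prop :=
  ∀ f : AddMonoid.End A, ∀ b ∈ B, f b ∈ B

/-- A minimal nonzero pure fully invariant subgroup. -/
def IsMinimalPureFullyInvariant {A : Type*} [AddCommGroup A] (B : AddSubgroup A) : Prop :=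
  B ≠ ⊥ ∧ IsPureSubgroup B ∧ IsFullyInvariant B ∧
    ∀ C : AddSubgroup A, C ≠ ⊥ → IsPureSubgroup C → IsFullyInvariant C → C ≤ B → C = B

/-- The pseudo-socle of `A`: the smallest pure subgroup containing all minimal nonzero
pure fully invariant subgroups of `A`. -/
def PSoc (A : Type*) [AddCommGroup A] : AddSubgroup A :=
  sInf {P : AddSubgroup A | IsPureSubgroup P ∧
    sSup {B : AddSubgroup A | IsMinimalPureFullyInvariant B} ≤ P}

/-- A torsion-free abelian group `A` is strongly indecomposable if there are no nonzero
subgroups `B, C` with `B ∩ C = 0` and `n • A ⊆ B + C` for some positive integer `n`. -/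
def StronglyIndecomposable (A : Type*) [AddCommGroup A] : Prop :=
  ¬∃ B C : AddSubgroup A, B ≠ ⊥ ∧ C ≠ ⊥ ∧ B ⊓ C = ⊥ ∧
    ∃ n : ℕ, 0 < n ∧ ∀ a : A, n • a ∈ B ⊔ C

/-!
A nonzero endomorphism does not vanish on some minimal pure fully invariant subgroup `B`, since
these subgroups generate `A` up to purification. If `z` commutes on `B` with every endomorphism
and is nonzero there, minimality of `B` forces `z(B)` to be pure-dense in `B`. Hence, when
`d * x = y` with `x, y` central and `y` nonzero on `B`, the element `d` commutes on `B` with every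
endomorphism. For `d = ⁅f, g⁆` this gives `⁅f * f, g⁆ = 2 f d` on `B`. Applying central
essentiality a second time, to `⁅f * f, g⁆ * y`, produces a `B` on which `d` and `⁅f * f, g⁆` are
both central; then `f` commutes with everything on `d(B)`, so `d ∘ d = 0` on `B`, which is
incompatible with `d(B)` being pure-dense in `B`.
-/

namespace AddSubgroup

variable {A : Type*} [AddCommGroup A]

def pureClosure (S : AddSubgroup A) : AddSubgroup A where
  carrier := {a | ∃ n : ℕ, 0 < n ∧ n • a ∈ S}
  zero_mem' := ⟨1, one_pos, by simp⟩
  add_mem' := by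
    rintro a a' ⟨n, hn, ha⟩ ⟨m, hm, ha'⟩
    refine ⟨n * m, Nat.mul_pos hn hm, ?_⟩
    rw [smul_add, mul_comm, mul_smul, mul_comm, mul_smul]
    exact S.add_mem (S.nsmul_mem ha m) (S.nsmul_mem ha' n)
  neg_mem' := by
    rintro a ⟨n, hn, ha⟩
    exact ⟨n, hn, by simpa only [smul_neg] using S.neg_mem ha⟩

theorem le_pureClosure (S : AddSubgroup A) : S ≤ S.pureClosure :=
  fun _ ha => ⟨1, one_pos, by rwa [one_smul]⟩

theorem isPureSubgroup_pureClosure (S : AddSubgroup A) : IsPureSubgroup S.pureClosure := by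
  rintro n hn _ ⟨m, hm, hx⟩ ⟨x, rfl⟩
  exact ⟨x, ⟨m * n, Nat.mul_pos hm hn, by rwa [mul_smul]⟩, rfl⟩

theorem pureClosure_le [IsAddTorsionFree A] {S B : AddSubgroup A} (hB : IsPureSubgroup B)
    (hSB : S ≤ B) : S.pureClosure ≤ B := by
  rintro a ⟨n, hn, ha⟩
  obtain ⟨b, hb, hba⟩ := hB n hn _ (hSB ha) ⟨a, rfl⟩
  rwa [← nsmul_right_injective hn.ne' hba]

end AddSubgroup

section

variable {A : Type*} [AddCommGroup A]

theorem IsFullyInvariant.pureClosure {S : AddSubgroup A} (hS : IsFullyInvariant S) :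
    IsFullyInvariant S.pureClosure := by
  rintro f a ⟨n, hn, ha⟩
  exact ⟨n, hn, by simpa only [map_nsmul] using hS f _ ha⟩

theorem IsMinimalPureFullyInvariant.apply_mem {B : AddSubgroup A}
    (hB : IsMinimalPureFullyInvariant B) (f : AddMonoid.End A) {b : A} (hb : b ∈ B) : f b ∈ B :=
  hB.2.2.1 f b hb

theorem psoc_le_pureClosure_sSup :
    PSoc A ≤ (sSup {B : AddSubgroup A | IsMinimalPureFullyInvariant B}).pureClosure :=
  sInf_le ⟨AddSubgroup.isPureSubgroup_pureClosure _, AddSubgroup.le_pureClosure _⟩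

theorem exists_isMinimalPureFullyInvariant_apply_ne_zero [IsAddTorsionFree A]
    (hpsoc : PSoc A = ⊤) {z : AddMonoid.End A} (hz : z ≠ 0) :
    ∃ B, IsMinimalPureFullyInvariant B ∧ ∃ b ∈ B, z b ≠ 0 := by
  by_contra! hvanish
  have hker : sSup {B : AddSubgroup A | IsMinimalPureFullyInvariant B} ≤ AddMonoidHom.ker z :=
    sSup_le fun B hB b hb => hvanish B hB b hb
  refine hz (AddMonoidHom.ext fun a => ?_)
  obtain ⟨n, hn, hna⟩ := (hpsoc ▸ psoc_le_pureClosure_sSup) (AddSubgroup.mem_top a)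
  have : n • z a = 0 := by rw [← map_nsmul]; exact hker hna
  exact (nsmul_eq_zero_iff_right hn.ne').mp this

def IsCentralOn (B : AddSubgroup A) (z : AddMonoid.End A) : Prop :=
  ∀ h : AddMonoid.End A, ∀ b ∈ B, h (z b) = z (h b)

theorem isCentralOn_of_mem_center {z : AddMonoid.End A} (hz : z ∈ Set.center (AddMonoid.End A))
    (B : AddSubgroup A) : IsCentralOn B z :=
  fun h b _ => DFunLike.congr_fun (Semigroup.mem_center_iff.mp hz h) b

theorem IsMinimalPureFullyInvariant.exists_apply_eq_nsmul [IsAddTorsionFree A]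
    {B : AddSubgroup A} (hB : IsMinimalPureFullyInvariant B) {z : AddMonoid.End A}
    (hz : IsCentralOn B z) (hne : ∃ b ∈ B, z b ≠ 0) :
    ∀ b ∈ B, ∃ n : ℕ, 0 < n ∧ ∃ c ∈ B, z c = n • b := by
  obtain ⟨-, hBpure, hBinv, hBmin⟩ := hB
  have hmap : IsFullyInvariant (B.map z) := by
    rintro h _ ⟨b, hb, rfl⟩
    exact ⟨h b, hBinv h b hb, (hz h b hb).symm⟩
  have hne_bot : (B.map z).pureClosure ≠ ⊥ := by
    obtain ⟨b, hb, hzb⟩ := hne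
    intro hbot
    have hmem := (B.map z).le_pureClosure (AddSubgroup.mem_map_of_mem z hb)
    rw [hbot, AddSubgroup.mem_bot] at hmem
    exact hzb hmem
  have hmap_le : B.map z ≤ B := by
    rintro _ ⟨b, hb, rfl⟩
    exact hBinv z b hb
  have hB_le : B ≤ (B.map z).pureClosure := (hBmin _ hne_bot
    (AddSubgroup.isPureSubgroup_pureClosure _) hmap.pureClosure
    (AddSubgroup.pureClosure_le hBpure hmap_le)).ge
  exact fun b hb => hB_le hb

theorem exists_apply_apply_ne_zero [IsAddTorsionFree A] {B : AddSubgroup A}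
    (hB : IsMinimalPureFullyInvariant B) {z : AddMonoid.End A} (hz : IsCentralOn B z)
    (hzne : ∃ b ∈ B, z b ≠ 0) {r : AddMonoid.End A} (hr : ∃ b ∈ B, r b ≠ 0) :
    ∃ c ∈ B, r (z c) ≠ 0 := by
  obtain ⟨b, hb, hrb⟩ := hr
  obtain ⟨n, hn, c, hc, hzc⟩ := hB.exists_apply_eq_nsmul hz hzne b hb
  refine ⟨c, hc, ?_⟩
  rw [hzc, map_nsmul]
  exact mt (nsmul_eq_zero_iff_right hn.ne').mp hrb

theorem IsCentralOn.of_mul [IsAddTorsionFree A] {B : AddSubgroup A}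
    (hB : IsMinimalPureFullyInvariant B) {r x : AddMonoid.End A}
    (hx : x ∈ Set.center (AddMonoid.End A)) (hxne : ∃ b ∈ B, x b ≠ 0)
    (hrx : IsCentralOn B (r * x)) : IsCentralOn B r := by
  intro h b hb
  obtain ⟨n, hn, c, hc, hxc⟩ :=
    hB.exists_apply_eq_nsmul (isCentralOn_of_mem_center hx B) hxne b hb
  apply nsmul_right_injective hn.ne'
  calc n • h (r b) = h (r (x c)) := by rw [hxc, map_nsmul, map_nsmul]
    _ = r (x (h c)) := hrx h c hc
    _ = r (h (x c)) := by rw [isCentralOn_of_mem_center hx B h c hc]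
    _ = n • r (h b) := by rw [hxc, map_nsmul, map_nsmul]

theorem IsCentrallyEssential.exists_mem_center_forall_isCentralOn [IsAddTorsionFree A]
    (hce : IsCentrallyEssential (AddMonoid.End A)) {r : AddMonoid.End A} (hr : r ≠ 0) :
    ∃ y ∈ Set.center (AddMonoid.End A), y ≠ 0 ∧ ∀ B, IsMinimalPureFullyInvariant B →
      (∃ b ∈ B, y b ≠ 0) → IsCentralOn B r ∧ ∃ b ∈ B, r b ≠ 0 := by
  obtain ⟨x, y, hx, hy, -, hy0, rfl⟩ := hce r hr
  refine ⟨r * x, hy, hy0, fun B hB ⟨b, hb, hrxb⟩ => ⟨?_, x b, hB.apply_mem x hb, hrxb⟩⟩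
  have hxb : x b ≠ 0 := fun h => hrxb (by simp [h])
  exact IsCentralOn.of_mul hB hx ⟨b, hb, hxb⟩ (isCentralOn_of_mem_center hy B)

theorem lie_apply (f g : AddMonoid.End A) (a : A) : ⁅f, g⁆ a = f (g a) - g (f a) :=
  rfl

theorem lie_mul_self_apply {B : AddSubgroup A} {f g : AddMonoid.End A} (hd : IsCentralOn B ⁅f, g⁆)
    {b : A} (hb : b ∈ B) : ⁅f * f, g⁆ b = 2 • f (⁅f, g⁆ b) := by
  have hlie : ⁅f * f, g⁆ = f * ⁅f, g⁆ + ⁅f, g⁆ * f := by simp only [Ring.lie_def]; noncomm_ring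
  calc ⁅f * f, g⁆ b = f (⁅f, g⁆ b) + ⁅f, g⁆ (f b) := by rw [hlie]; rfl
    _ = 2 • f (⁅f, g⁆ b) := by rw [← hd f b hb, two_nsmul]

theorem exists_lie_mul_self_apply_ne_zero [IsAddTorsionFree A] {B : AddSubgroup A}
    (hB : IsMinimalPureFullyInvariant B) {f g : AddMonoid.End A} (hd : IsCentralOn B ⁅f, g⁆)
    (hdne : ∃ b ∈ B, ⁅f, g⁆ b ≠ 0) : ∃ c ∈ B, ⁅f * f, g⁆ c ≠ 0 := by
  have hf : ∃ b ∈ B, f b ≠ 0 := by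
    by_contra! hf
    obtain ⟨b, hb, hdb⟩ := hdne
    exact hdb (by rw [lie_apply, hf b hb, hf (g b) (hB.apply_mem g hb), map_zero, sub_zero])
  obtain ⟨c, hc, hfc⟩ := exists_apply_apply_ne_zero hB hd hdne hf
  exact ⟨c, hc, by simpa [lie_mul_self_apply hd hc] using hfc⟩

theorem lie_apply_eq_zero_of_isCentralOn [IsAddTorsionFree A] {B : AddSubgroup A}
    (hB : IsMinimalPureFullyInvariant B) {f g : AddMonoid.End A} (hd : IsCentralOn B ⁅f, g⁆)
    (hd₂ : IsCentralOn B ⁅f * f, g⁆) : ∀ b ∈ B, ⁅f, g⁆ b = 0 := by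
  have hf : ∀ h : AddMonoid.End A, ∀ b ∈ B, h (f (⁅f, g⁆ b)) = f (h (⁅f, g⁆ b)) := by
    intro h b hb
    have := hd₂ h b hb
    rw [lie_mul_self_apply hd hb, lie_mul_self_apply hd (hB.apply_mem h hb), map_nsmul,
      ← hd h b hb] at this
    exact nsmul_right_injective two_ne_zero this
  by_contra! hne
  obtain ⟨c, hc, hddc⟩ := exists_apply_apply_ne_zero hB hd hne hne
  exact hddc (by rw [lie_apply, hf g c hc, sub_self])

theorem mul_comm_of_isCentrallyEssential_end [IsAddTorsionFree A] (hpsoc : PSoc A = ⊤)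
    (hce : IsCentrallyEssential (AddMonoid.End A)) (f g : AddMonoid.End A) : f * g = g * f := by
  by_contra hfg
  obtain ⟨y, hy, hy0, hdy⟩ := hce.exists_mem_center_forall_isCentralOn (sub_ne_zero.mpr hfg)
  obtain ⟨B₁, hB₁, hyB₁⟩ := exists_isMinimalPureFullyInvariant_apply_ne_zero hpsoc hy0
  obtain ⟨hdB₁, hdneB₁⟩ := hdy B₁ hB₁ hyB₁
  have hd₂y : ⁅f * f, g⁆ * y ≠ 0 := by
    obtain ⟨c, -, hc⟩ := exists_apply_apply_ne_zero hB₁ (isCentralOn_of_mem_center hy B₁) hyB₁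
      (exists_lie_mul_self_apply_ne_zero hB₁ hdB₁ hdneB₁)
    exact fun h => hc (DFunLike.congr_fun h c)
  obtain ⟨y', -, hy'0, hd₂yy'⟩ := hce.exists_mem_center_forall_isCentralOn hd₂y
  obtain ⟨B, hB, hy'B⟩ := exists_isMinimalPureFullyInvariant_apply_ne_zero hpsoc hy'0
  obtain ⟨hd₂yB, b, hb, hb0⟩ := hd₂yy' B hB hy'B
  have hyB : ∃ b ∈ B, y b ≠ 0 := ⟨b, hb, fun h => hb0 (by simp [h])⟩
  obtain ⟨hdB, b', hb', hb'0⟩ := hdy B hB hyB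
  exact hb'0 (lie_apply_eq_zero_of_isCentralOn hB hdB (hd₂yB.of_mul hB hy hyB) b' hb')

end

theorem isCentrallyEssential_of_forall_mul_comm {R : Type*} [Ring R]
    (h : ∀ a b : R, a * b = b * a) : IsCentrallyEssential R := by
  intro a ha
  have : Nontrivial R := nontrivial_of_ne a 0 ha
  exact ⟨1, a, Set.one_mem_center, Semigroup.mem_center_iff.mpr fun b => h b a, one_ne_zero, ha,
    mul_one a⟩

theorem isCentrallyEssential_end_iff_comm_of_psoc_eq_top_general
    (A : Type*) [AddCommGroup A]
    (htf : ∀ (n : ℕ) (a : A), 0 < n → n • a = 0 → a = 0)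
    (hpsoc : PSoc A = ⊤) :
    IsCentrallyEssential (AddMonoid.End A) ↔
      ∀ f g : AddMonoid.End A, f * g = g * f := by
  have : IsAddTorsionFree A := ⟨fun n hn a b hab => sub_eq_zero.mp <|
    htf n (a - b) (Nat.pos_of_ne_zero hn) (by simpa [smul_sub, sub_eq_zero] using hab)⟩
  exact ⟨mul_comm_of_isCentrallyEssential_end hpsoc, isCentrallyEssential_of_forall_mul_comm⟩

/-- for a strongly indecomposable torsion-free abelian group `A` with
`A = PSoc A`, the endomorphism ring of `A` is centrally essential iff it is
commutative. -/
theorem isCentrallyEssential_end_iff_comm_of_psoc_eq_top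
    (A : Type*) [AddCommGroup A]
    (htf : ∀ (n : ℕ) (a : A), 0 < n → n • a = 0 → a = 0)
    (hsi : StronglyIndecomposable A) (hpsoc : PSoc A = ⊤) :
    IsCentrallyEssential (AddMonoid.End A) ↔
      ∀ f g : AddMonoid.End A, f * g = g * f :=
  isCentrallyEssential_end_iff_comm_of_psoc_eq_top_general A htf hpsoc
end

section
/- Let R be a local Artinian ring that is not a division ring, with center C. If R is centrally essential, then the quotient ring R/J(R) is commutative and C ∩ M ≠ 0 for every minimal right ideal M of R. -/
/-- A right ideal of `R`: an additive subgroup stable under right multiplication. -/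
def IsRightIdeal {R : Type*} [Ring R] (M : AddSubgroup R) : Prop :=
  ∀ a ∈ M, ∀ r : R, a * r ∈ M

/-- A minimal right ideal: a nonzero right ideal properly containing no nonzero
right ideal. -/
def IsMinimalRightIdeal {R : Type*} [Ring R] (M : AddSubgroup R) : Prop :=
  M ≠ ⊥ ∧ IsRightIdeal M ∧
    ∀ N : AddSubgroup R, IsRightIdeal N → N ≤ M → N = ⊥ ∨ N = M

/-!
Pick a nonzero `l` in a minimal left ideal of the local Artinian ring `R`. Every nonunit `j`
kills it: otherwise `R j l` is the whole minimal ideal, so `l = r j l` with `1 - r j` a unit.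
Hence the nonunits also kill every `l r`. In a centrally essential ring an element `l` killed
by all nonunits is central: writing `l x = y` with `x, y` central and nonzero, `x` cannot be a
nonunit, so `l = y x⁻¹`. Thus `l R` is central, which forces `l (a b - b a) = 0`; as `l ≠ 0`,
`a b - b a` is a nonunit, i.e. lies in `J(R)`.

For a nonzero right ideal `M` and `0 ≠ m ∈ M`, central essentiality makes some `m x ∈ M`
central and nonzero.
-/

namespace IsLocalRing

variable {R : Type*} [Ring R] [IsLocalRing R]

theorem isUnit_one_sub_of_not_isUnit {a : R} (ha : ¬IsUnit a) : IsUnit (1 - a) :=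
  (isUnit_or_isUnit_of_add_one (add_sub_cancel a 1)).resolve_left ha

variable [IsDedekindFiniteMonoid R]

theorem mem_jacobson_bot_of_not_isUnit {x : R} (hx : ¬IsUnit x) :
    x ∈ Ideal.jacobson (⊥ : Ideal R) := by
  refine Ideal.mem_jacobson_iff.mpr fun y => ?_
  have hyx : ¬IsUnit (-(y * x)) := by
    rw [IsUnit.neg_iff]
    exact mt isUnit_of_mul_isUnit_right hx
  obtain ⟨z, hz⟩ := (isUnit_one_sub_of_not_isUnit hyx).exists_left_inv
  refine ⟨z, ?_⟩
  rw [Ideal.mem_bot, ← hz]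
  noncomm_ring

theorem not_isUnit_mul_eq_zero_of_isAtom {L : Submodule R R} (hL : IsAtom L) {l : R} (hl : l ∈ L)
    {j : R} (hj : ¬IsUnit j) : j * l = 0 := by
  have hle : R ∙ (j * l) ≤ L := (Submodule.span_singleton_le_iff_mem _ _).mpr (L.smul_mem j hl)
  rcases hL.le_iff.mp hle with hbot | htop
  · simpa using hbot
  · obtain ⟨r, hr⟩ := Submodule.mem_span_singleton.mp (htop ▸ hl : l ∈ R ∙ (j * l))
    have hrj : IsUnit (1 - r * j) := isUnit_one_sub_of_not_isUnit (mt isUnit_of_mul_isUnit_right hj)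
    have h0 : (1 - r * j) * l = 0 := by
      rw [sub_mul, one_mul, mul_assoc, ← smul_eq_mul r, hr, sub_self]
    rw [hrj.mul_right_eq_zero.mp h0, mul_zero]

end IsLocalRing

theorem mul_mul_sub_mul_eq_zero_of_forall_mul_mem_center {R : Type*} [Ring R] {z : R}
    (hz : ∀ r, z * r ∈ Set.center R) (a b : R) : z * (a * b - b * a) = 0 := by
  have hzc : z ∈ Set.center R := by simpa using hz 1
  rw [mul_sub, sub_eq_zero]
  calc z * (a * b) = b * (z * a) := by rw [← mul_assoc, ((hz a).comm b).eq]
    _ = z * (b * a) := by rw [← mul_assoc, ← (hzc.comm b).eq, mul_assoc]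

namespace IsCentrallyEssential

variable {R : Type*} [Ring R]

theorem mem_center_of_forall_not_isUnit_mul_eq_zero (hce : IsCentrallyEssential R) {l : R}
    (hl : ∀ j, ¬IsUnit j → j * l = 0) : l ∈ Set.center R := by
  rcases eq_or_ne l 0 with rfl | hl0
  · exact Set.zero_mem_center
  obtain ⟨x, y, hx, hy, -, hy0, rfl⟩ := hce l hl0
  have hxu : IsUnit x := by
    by_contra hxu
    exact hy0 (by rw [← hx.comm, hl x hxu])
  refine Semigroup.mem_center_iff.mpr fun g => hxu.mul_left_cancel ?_
  calc x * (g * l) = g * (l * x) := by rw [← mul_assoc, (hx.comm g).eq, mul_assoc, (hx.comm l).eq]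
    _ = x * (l * g) := by rw [← (hy.comm g).eq, ← (hx.comm l).eq, mul_assoc]

theorem exists_ne_zero_mem_center_mem_of_isRightIdeal (hce : IsCentrallyEssential R)
    {M : AddSubgroup R} (hM : IsRightIdeal M) (hM0 : M ≠ ⊥) :
    ∃ x : R, x ≠ 0 ∧ x ∈ Set.center R ∧ x ∈ M := by
  obtain ⟨m, hmM, hm0⟩ := M.bot_or_exists_ne_zero.resolve_left hM0
  obtain ⟨x, y, hx, hy, -, hy0, rfl⟩ := hce m hm0
  exact ⟨m * x, hy0, hy, hM m hmM x⟩

end IsCentrallyEssential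

theorem comm_mod_jacobson_and_center_meets_minimal_of_isCentrallyEssential_general
    (R : Type*) [Ring R] [IsLocalRing R] [IsArtinianRing R]
    (hce : IsCentrallyEssential R) :
    (∀ a b : R, a * b - b * a ∈ Ideal.jacobson (⊥ : Ideal R)) ∧
      ∀ M : AddSubgroup R, IsMinimalRightIdeal M →
        ∃ x : R, x ≠ 0 ∧ x ∈ Set.center R ∧ x ∈ M := by
  refine ⟨fun a b => ?_, fun M hM =>
    hce.exists_ne_zero_mem_center_mem_of_isRightIdeal hM.2.1 hM.1⟩
  obtain ⟨L, hL⟩ := IsAtomic.exists_atom (Submodule R R)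
  obtain ⟨l, hlL, hl0⟩ := Submodule.exists_mem_ne_zero_of_ne_bot hL.1
  have hlR : ∀ r, l * r ∈ Set.center R := fun r =>
    hce.mem_center_of_forall_not_isUnit_mul_eq_zero fun j hj => by
      rw [← mul_assoc, IsLocalRing.not_isUnit_mul_eq_zero_of_isAtom hL hlL hj, zero_mul]
  refine IsLocalRing.mem_jacobson_bot_of_not_isUnit fun hu => hl0 ?_
  exact hu.mul_left_eq_zero.mp (mul_mul_sub_mul_eq_zero_of_forall_mul_mem_center hlR a b)

/-- if a local Artinian ring `R` which is not a division ring is centrally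
essential, then `R/J(R)` is commutative and `C(R) ∩ M ≠ 0` for every minimal right
ideal `M`. -/
theorem comm_mod_jacobson_and_center_meets_minimal_of_isCentrallyEssential
    (R : Type*) [Ring R] [IsLocalRing R] [IsArtinianRing R]
    (hnd : ∃ a : R, a ≠ 0 ∧ ¬IsUnit a)
    (hce : IsCentrallyEssential R) :
    (∀ a b : R, a * b - b * a ∈ Ideal.jacobson (⊥ : Ideal R)) ∧
      ∀ M : AddSubgroup R, IsMinimalRightIdeal M →
        ∃ x : R, x ≠ 0 ∧ x ∈ Set.center R ∧ x ∈ M :=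
  comm_mod_jacobson_and_center_meets_minimal_of_isCentrallyEssential_general R hce
end

section
/- Let R be a local Artinian ring that is not a division ring, with center C. If the quotient ring R/J(R) is commutative, the socle of R as a right R-module coincides with the socle of R as a C-module, and C ∩ M ≠ 0 for every minimal right ideal M of R, then R is a centrally essential ring. -/
/-- A `C(R)`-submodule of `R`: an additive subgroup stable under multiplication by
central elements. -/
def IsCenterSubmodule {R : Type*} [Ring R] (M : AddSubgroup R) : Prop :=
  ∀ a ∈ M, ∀ c ∈ Set.center R, c * a ∈ M

/-- A minimal (simple) `C(R)`-submodule of `R`. -/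
def IsMinimalCenterSubmodule {R : Type*} [Ring R] (M : AddSubgroup R) : Prop :=
  M ≠ ⊥ ∧ IsCenterSubmodule M ∧
    ∀ N : AddSubgroup R, IsCenterSubmodule N → N ≤ M → N = ⊥ ∨ N = M

/-- The socle of `R` as a right `R`-module: the sum of all minimal right ideals. -/
def rightSocle (R : Type*) [Ring R] : AddSubgroup R :=
  sSup {M : AddSubgroup R | IsMinimalRightIdeal M}

/-- The socle of `R` as a module over its center: the sum of all simple
`C(R)`-submodules of `R`. -/
def centerSocle (R : Type*) [Ring R] : AddSubgroup R :=
  sSup {M : AddSubgroup R | IsMinimalCenterSubmodule M}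

/-!
Fix `a ≠ 0`. Since the Jacobson radical `J` is nilpotent, there is a central `c` with `b = a * c ≠ 0`
but `b * d = 0` for every central `d ∈ J`. In a local ring the central non-units lie in `J` and the
central units have central inverses, so `b * C(R)` is a simple `C(R)`-module and `b` lies in the
socle. A minimal right ideal `M` is killed by `J` on the right, and by hypothesis `M = z * R` for a
central `z`; as `J` contains all commutators, `M` is central. Hence the socle is central, `b` is
central, and `a * c = b` exhibits `R` as centrally essential.
-/

open Set

section

variable {R : Type*} [Ring R]

theorem IsLocalRing.mem_jacobson_bot_of_not_isUnit_s10 [IsLocalRing R] [IsDedekindFiniteMonoid R]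
    {x : R} (hx : ¬IsUnit x) : x ∈ Ideal.jacobson (⊥ : Ideal R) := by
  refine Ideal.mem_jacobson_iff.2 fun y => ?_
  have hyx : ¬IsUnit (-(y * x)) := fun h => hx (isUnit_of_mul_isUnit_right (by simpa using h.neg))
  obtain ⟨u, hu⟩ := (IsLocalRing.isUnit_or_isUnit_of_add_one
    (neg_add_cancel_left (y * x) 1)).resolve_left hyx
  refine ⟨↑u⁻¹, ?_⟩
  rw [Submodule.mem_bot, mul_assoc, ← mul_add_one, ← hu, Units.inv_mul, sub_self]

theorem IsLocalRing.isUnit_one_sub_of_mem_jacobson_bot [IsLocalRing R] {e : R}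
    (he : e ∈ Ideal.jacobson (⊥ : Ideal R)) : IsUnit (1 - e) := by
  have hne : ¬IsUnit e := fun hu => (bot_ne_top : (⊥ : Ideal R) ≠ ⊤)
    (Ideal.jacobson_eq_top_iff.1 (Ideal.eq_top_of_isUnit_mem _ he hu))
  exact (IsLocalRing.isUnit_or_isUnit_of_add_one (add_sub_cancel e 1)).resolve_left hne

theorem IsNilpotent.exists_mem_center_mul_ne_zero {I : Ideal R} (hI : IsNilpotent I) {a : R}
    (ha : a ≠ 0) : ∃ c ∈ center R, a * c ≠ 0 ∧ ∀ d ∈ center R, d ∈ I → a * c * d = 0 := by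
  classical
  have hex : ∃ k, ∀ c ∈ center R, c ∈ I ^ k → a * c = 0 := by
    obtain ⟨n, hn⟩ := hI
    refine ⟨n, fun c _ hc => ?_⟩
    rw [hn, Submodule.zero_eq_bot, Submodule.mem_bot] at hc
    rw [hc, mul_zero]
  have hfind : Nat.find hex ≠ 0 := fun h => ha <| by
    simpa using Nat.find_spec hex 1 one_mem_center (h ▸ Submodule.one_le.1 le_rfl)
  obtain ⟨k, hk⟩ := Nat.exists_eq_succ_of_ne_zero hfind
  -- `c` is a central element of `I ^ k` not killed by `a`, with `k` as large as possible.
  obtain ⟨c, hc, hcI, hac⟩ : ∃ c ∈ center R, c ∈ I ^ k ∧ a * c ≠ 0 := by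
    simpa using Nat.find_min hex (hk ▸ k.lt_succ_self)
  refine ⟨c, hc, hac, fun d hd hdI => ?_⟩
  rw [mul_assoc]
  exact Nat.find_spec hex _ (mul_mem_center hc hd) (hk ▸ Submodule.mul_mem_mul hcI hdI)

namespace IsMinimalRightIdeal

variable {M : AddSubgroup R}

theorem exists_mul_eq (hM : IsMinimalRightIdeal M) {x y : R} (hx : x ∈ M) (hx0 : x ≠ 0)
    (hy : y ∈ M) : ∃ r, x * r = y := by
  have hxR : IsRightIdeal (AddMonoidHom.mulLeft x).range := by
    rintro _ ⟨r, rfl⟩ s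
    exact ⟨r * s, (mul_assoc x r s).symm⟩
  have hle : (AddMonoidHom.mulLeft x).range ≤ M := by
    rintro _ ⟨r, rfl⟩
    exact hM.2.1 x hx r
  rcases hM.2.2 _ hxR hle with hbot | heq
  · exact absurd (AddSubgroup.mem_bot.1 (hbot ▸ ⟨1, mul_one x⟩)) hx0
  · rw [← heq] at hy
    exact hy

theorem mul_eq_zero_of_mem_jacobson_bot [IsLocalRing R] (hM : IsMinimalRightIdeal M) {m j : R}
    (hm : m ∈ M) (hj : j ∈ Ideal.jacobson (⊥ : Ideal R)) : m * j = 0 := by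
  by_contra hmj
  obtain ⟨r, hr⟩ := hM.exists_mul_eq (hM.2.1 m hm j) hmj hm
  have hm0 : m * (1 - j * r) = 0 := by rw [mul_sub, mul_one, ← mul_assoc, hr, sub_self]
  rw [(IsLocalRing.isUnit_one_sub_of_mem_jacobson_bot
    (Ideal.mul_mem_right r _ hj)).mul_left_eq_zero] at hm0
  exact hmj (by rw [hm0, zero_mul])

theorem subset_center [IsLocalRing R]
    (hcomm : ∀ a b : R, a * b - b * a ∈ Ideal.jacobson (⊥ : Ideal R))
    (hM : IsMinimalRightIdeal M) (hz : ∃ z : R, z ≠ 0 ∧ z ∈ center R ∧ z ∈ M) :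
    (M : Set R) ⊆ center R := by
  obtain ⟨z, hz0, hzc, hzM⟩ := hz
  intro x hx
  obtain ⟨r, rfl⟩ := hM.exists_mul_eq hzM hz0 hx
  refine Semigroup.mem_center_iff.2 fun g => ?_
  have hzg : z * (g * r - r * g) = 0 := hM.mul_eq_zero_of_mem_jacobson_bot hzM (hcomm g r)
  rw [mul_sub, sub_eq_zero] at hzg
  calc g * (z * r) = z * (g * r) := by rw [← mul_assoc, Semigroup.mem_center_iff.1 hzc, mul_assoc]
    _ = z * r * g := by rw [hzg, mul_assoc]

end IsMinimalRightIdeal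

theorem rightSocle_le_center [IsLocalRing R]
    (hcomm : ∀ a b : R, a * b - b * a ∈ Ideal.jacobson (⊥ : Ideal R))
    (hmeet : ∀ M : AddSubgroup R, IsMinimalRightIdeal M →
      ∃ x : R, x ≠ 0 ∧ x ∈ center R ∧ x ∈ M) :
    rightSocle R ≤ (Subring.center R).toAddSubgroup :=
  sSup_le fun M hM _ hx => hM.subset_center hcomm (hmeet M hM) hx

def mulCenter (b : R) : AddSubgroup R :=
  (Subring.center R).toAddSubgroup.map (AddMonoidHom.mulLeft b)

theorem mem_mulCenter {b y : R} : y ∈ mulCenter b ↔ ∃ c ∈ center R, b * c = y := Iff.rfl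

theorem self_mem_mulCenter (b : R) : b ∈ mulCenter b :=
  mem_mulCenter.2 ⟨1, one_mem_center, mul_one b⟩

theorem isMinimalCenterSubmodule_mulCenter {b : R} (hb : b ≠ 0)
    (hkill : ∀ d ∈ center R, ¬IsUnit d → b * d = 0) : IsMinimalCenterSubmodule (mulCenter b) := by
  refine ⟨fun h => hb (AddSubgroup.mem_bot.1 (h ▸ self_mem_mulCenter b)), ?_, fun N hN hle => ?_⟩
  · rintro _ ⟨c, hc, rfl⟩ d hd
    refine mem_mulCenter.2 ⟨d * c, mul_mem_center hd hc, ?_⟩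
    rw [AddMonoidHom.coe_mulLeft, ← mul_assoc, Semigroup.mem_center_iff.1 hd b, mul_assoc]
  rcases N.bot_or_exists_ne_zero with hN0 | ⟨x, hxN, hx0⟩
  · exact Or.inl hN0
  refine Or.inr (le_antisymm hle ?_)
  obtain ⟨c, hc, rfl⟩ := mem_mulCenter.1 (hle hxN)
  obtain ⟨u, rfl⟩ : IsUnit c := not_not.1 fun hcu => hx0 (hkill c hc hcu)
  have hbN : b ∈ N := by
    have hinv := units_inv_mem_center hc
    have h := hN _ hxN _ hinv
    rwa [← Semigroup.mem_center_iff.1 hinv, mul_assoc, Units.mul_inv, mul_one] at h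
  rintro _ hy
  obtain ⟨d, hd, rfl⟩ := mem_mulCenter.1 hy
  simpa [Semigroup.mem_center_iff.1 hd] using hN b hbN d hd

end

theorem isCentrallyEssential_of_comm_mod_jacobson_general
    (R : Type*) [Ring R] [IsLocalRing R] [IsArtinianRing R]
    (hcomm : ∀ a b : R, a * b - b * a ∈ Ideal.jacobson (⊥ : Ideal R))
    (hsoc : rightSocle R = centerSocle R)
    (hmeet : ∀ M : AddSubgroup R, IsMinimalRightIdeal M →
      ∃ x : R, x ≠ 0 ∧ x ∈ Set.center R ∧ x ∈ M) :
    IsCentrallyEssential R := by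
  intro a ha
  obtain ⟨c, hc, hac, hkill⟩ :=
    IsArtinianRing.isNilpotent_jacobson_bot.exists_mem_center_mul_ne_zero ha
  have hmin : IsMinimalCenterSubmodule (mulCenter (a * c)) :=
    isMinimalCenterSubmodule_mulCenter hac fun d hd hdu =>
      hkill d hd (IsLocalRing.mem_jacobson_bot_of_not_isUnit_s10 hdu)
  have hsocle : mulCenter (a * c) ≤ centerSocle R := le_sSup hmin
  rw [← hsoc] at hsocle
  have hcentral : a * c ∈ Set.center R :=
    rightSocle_le_center hcomm hmeet (hsocle (self_mem_mulCenter _))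
  exact ⟨c, a * c, hc, hcentral, right_ne_zero_of_mul hac, hac, rfl⟩

/-- a local Artinian ring `R` which is not a division ring is centrally
essential provided `R/J(R)` is commutative, `Soc(R_R) = Soc(R_{C(R)})`, and
`C(R) ∩ M ≠ 0` for every minimal right ideal `M`. -/
theorem isCentrallyEssential_of_comm_mod_jacobson
    (R : Type*) [Ring R] [IsLocalRing R] [IsArtinianRing R]
    (hnd : ∃ a : R, a ≠ 0 ∧ ¬IsUnit a)
    (hcomm : ∀ a b : R, a * b - b * a ∈ Ideal.jacobson (⊥ : Ideal R))
    (hsoc : rightSocle R = centerSocle R)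
    (hmeet : ∀ M : AddSubgroup R, IsMinimalRightIdeal M →
      ∃ x : R, x ≠ 0 ∧ x ∈ Set.center R ∧ x ∈ M) :
    IsCentrallyEssential R :=
  isCentrallyEssential_of_comm_mod_jacobson_general R hcomm hsoc hmeet
end

section
/- Let A be a strongly indecomposable torsion-free abelian group of finite rank with quasi-endomorphism ring ℚEnd(A) = ℚ ⊗_ℤ End(A), and suppose A ≠ PSoc(A). If the quotient ring ℚEnd(A)/J(ℚEnd(A)) is commutative, the socle of ℚEnd(A) as a right module over itself coincides with its socle as a module over its center C(ℚEnd(A)), and C(ℚEnd(A)) ∩ M ≠ 0 for every minimal right ideal M of ℚEnd(A), then ℚEnd(A) is a centrally essential ring. -/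
open TensorProduct

/-!
Let `R = ℚEnd A`; it is a finite-dimensional `ℚ`-algebra because `A` is torsion-free of finite
rank. If a minimal right ideal `M` contains a central `x ≠ 0`, then `M = xR`, and `x` kills
`J(R)`: otherwise `x ∈ xjR`, say `x = xjs = jsx`, and `1 - js` is left invertible. Since every
commutator lies in `J(R)`, each `xr ∈ M` is then central, so `Soc(R_R) ⊆ C(R)`. Given `a ≠ 0`,
the `C(R)`-module `a C(R)` is artinian, so it contains a simple `C(R)`-submodule, which lies in
the `C(R)`-socle `= Soc(R_R) ⊆ C(R)`; a nonzero element of it is a central `ac` with `c` central.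
-/

section RightIdeals

variable {R : Type*} [Ring R]

lemma exists_mul_one_sub_eq_one_of_mem_jacobson {j : R} (hj : j ∈ (⊥ : Ideal R).jacobson) :
    ∃ z : R, z * (1 - j) = 1 := by
  obtain ⟨z, hz⟩ := Ideal.mem_jacobson_iff.mp hj (-1)
  refine ⟨z, ?_⟩
  rw [← sub_eq_zero, ← (Submodule.mem_bot R).mp hz]
  noncomm_ring

lemma IsMinimalRightIdeal.exists_mul_eq_s13 {M : AddSubgroup R} (hM : IsMinimalRightIdeal M)
    {y m : R} (hy : y ∈ M) (hy0 : y ≠ 0) (hm : m ∈ M) : ∃ r : R, y * r = m := by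
  let N := (AddMonoidHom.mulLeft y).range
  have hN : IsRightIdeal N := by
    rintro _ ⟨s, rfl⟩ r
    exact ⟨s * r, (mul_assoc y s r).symm⟩
  have hNM : N ≤ M := by
    rintro _ ⟨r, rfl⟩
    exact hM.2.1 y hy r
  have hN0 : N ≠ ⊥ := fun h ↦ hy0 <| AddSubgroup.mem_bot.mp (h ▸ ⟨1, mul_one y⟩)
  exact ((hM.2.2 N hN hNM).resolve_left hN0 ▸ hm : m ∈ N)

lemma IsMinimalRightIdeal.mul_eq_zero_of_mem_jacobson {M : AddSubgroup R}
    (hM : IsMinimalRightIdeal M) {x j : R} (hxM : x ∈ M) (hxc : x ∈ Set.center R)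
    (hj : j ∈ (⊥ : Ideal R).jacobson) : x * j = 0 := by
  by_contra hxj
  obtain ⟨s, hs⟩ := hM.exists_mul_eq_s13 (hM.2.1 x hxM j) hxj hxM
  obtain ⟨z, hz⟩ := exists_mul_one_sub_eq_one_of_mem_jacobson
    ((⊥ : Ideal R).jacobson.mul_mem_right s hj)
  have hjs : j * s * x = x := by
    rw [Semigroup.mem_center_iff.mp hxc (j * s), ← mul_assoc, hs]
  have hx : x = 0 := by
    calc x = z * (1 - j * s) * x := by rw [hz, one_mul]
      _ = z * (x - j * s * x) := by rw [mul_assoc, sub_mul, one_mul]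
      _ = 0 := by rw [hjs, sub_self, mul_zero]
  exact hxj (by rw [hx, zero_mul])

lemma IsMinimalRightIdeal.mem_center {M : AddSubgroup R} (hM : IsMinimalRightIdeal M)
    (hcomm : ∀ a b : R, a * b - b * a ∈ (⊥ : Ideal R).jacobson)
    {x : R} (hx0 : x ≠ 0) (hxc : x ∈ Set.center R) (hxM : x ∈ M) {m : R} (hm : m ∈ M) :
    m ∈ Set.center R := by
  obtain ⟨r, rfl⟩ := hM.exists_mul_eq_s13 hxM hx0 hm
  refine Semigroup.mem_center_iff.mpr fun t ↦ ?_
  have hrt : x * (r * t) = x * (t * r) := by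
    rw [← sub_eq_zero, ← mul_sub]
    exact hM.mul_eq_zero_of_mem_jacobson hxM hxc (hcomm r t)
  rw [mul_assoc, hrt, ← mul_assoc, ← mul_assoc, Semigroup.mem_center_iff.mp hxc t]

lemma rightSocle_subset_center (hcomm : ∀ a b : R, a * b - b * a ∈ (⊥ : Ideal R).jacobson)
    (hmeet : ∀ M : AddSubgroup R, IsMinimalRightIdeal M →
      ∃ x : R, x ≠ 0 ∧ x ∈ Set.center R ∧ x ∈ M) :
    (rightSocle R : Set R) ⊆ Set.center R :=
  show rightSocle R ≤ (Subring.center R).toAddSubgroup from sSup_le fun M hM ↦ by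
    obtain ⟨x, hx0, hxc, hxM⟩ := hmeet M hM
    exact fun m hm ↦ hM.mem_center hcomm hx0 hxc hxM hm

end RightIdeals

section CenterSubmodules

variable {K R : Type*} [CommSemiring K] [Ring R] [Algebra K R]

lemma isMinimalCenterSubmodule_toAddSubgroup {p : Submodule (Subalgebra.center K R) R}
    (hp : IsAtom p) : IsMinimalCenterSubmodule p.toAddSubgroup := by
  refine ⟨fun h ↦ hp.1 <| Submodule.toAddSubgroup_injective <|
      h.trans Submodule.bot_toAddSubgroup.symm,
    fun a ha c hc ↦ p.smul_mem ⟨c, hc⟩ ha, fun N hN hNp ↦ ?_⟩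
  let N' : Submodule (Subalgebra.center K R) R :=
    { N with smul_mem' := fun c a ha ↦ hN a ha c c.2 }
  rcases hp.le_iff.mp (show N' ≤ p from hNp) with h | h
  · left; simpa [N'] using congrArg Submodule.toAddSubgroup h
  · right; exact congrArg Submodule.toAddSubgroup h

lemma isCentrallyEssential_of_centerSocle_subset_center [IsArtinian K R]
    (h : (centerSocle R : Set R) ⊆ Set.center R) : IsCentrallyEssential R := by
  have : IsArtinian (Subalgebra.center K R) R := isArtinian_of_tower K inferInstance
  intro a ha
  obtain ⟨p, hp, hpa⟩ := (eq_bot_or_exists_atom_le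
    (Submodule.span (Subalgebra.center K R) {a})).resolve_left (by simpa using ha)
  obtain ⟨b, hbp, hb0⟩ := Submodule.exists_mem_ne_zero_of_ne_bot hp.1
  obtain ⟨c, rfl⟩ := Submodule.mem_span_singleton.mp (hpa hbp)
  have hsoc : p.toAddSubgroup ≤ centerSocle R :=
    le_sSup (isMinimalCenterSubmodule_toAddSubgroup hp)
  refine ⟨c, c • a, c.2, h (hsoc hbp), fun hc ↦ hb0 (by rw [Subalgebra.smul_def, hc, zero_smul]),
    hb0, ?_⟩
  rw [Subalgebra.smul_def, smul_eq_mul]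
  exact Subalgebra.mem_center_iff.mp c.2 a

end CenterSubmodules

section QuasiEndomorphisms

variable {A : Type*} [AddCommGroup A] [IsAddTorsionFree A]

lemma eq_zero_of_one_tmul_eq_zero {a : A} (ha : (1 : ℚ) ⊗ₜ[ℤ] a = 0) : a = 0 := by
  obtain ⟨s, hs⟩ := (IsLocalizedModule.eq_zero_iff (nonZeroDivisors ℤ)
    (TensorProduct.mk ℤ ℚ A 1)).mp ha
  exact (smul_eq_zero_iff_right (nonZeroDivisors.coe_ne_zero s)).mp hs

instance finiteDimensional_rat_tensor_addMonoidEnd [FiniteDimensional ℚ (ℚ ⊗[ℤ] A)] :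
    FiniteDimensional ℚ (ℚ ⊗[ℤ] AddMonoid.End A) := by
  let φ : AddMonoid.End A →ₗ[ℤ] Module.End ℚ (ℚ ⊗[ℤ] A) :=
    (LinearMap.baseChangeHom ℤ ℚ A A).comp
      (addMonoidEndRingEquivInt A).toAddMonoidHom.toIntLinearMap
  refine FiniteDimensional.of_injective (LinearMap.liftBaseChange ℚ φ) ?_
  refine (injective_iff_map_eq_zero _).mpr fun t ht ↦ ?_
  obtain ⟨⟨f, s⟩, hs⟩ := IsLocalizedModule.surj (nonZeroDivisors ℤ) (TensorProduct.mk ℤ ℚ _ 1) t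
  have hφ : φ f = 0 := by
    calc φ f = LinearMap.liftBaseChange ℚ φ (TensorProduct.mk ℤ ℚ _ 1 f) := by
          rw [TensorProduct.mk_apply, LinearMap.liftBaseChange_tmul, one_smul]
      _ = 0 := by rw [← hs, Submonoid.smul_def, map_zsmul, ht, smul_zero]
  have hf : f = 0 := by
    ext a
    exact eq_zero_of_one_tmul_eq_zero congr($hφ (1 ⊗ₜ a))
  have hst : (s : ℤ) • t = 0 := by rw [← Submonoid.smul_def, hs, hf, map_zero]
  have : IsAddTorsionFree (ℚ ⊗[ℤ] AddMonoid.End A) := .of_module_rat _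
  exact (smul_eq_zero_iff_right (nonZeroDivisors.coe_ne_zero s)).mp hst

end QuasiEndomorphisms

theorem isCentrallyEssential_quasiEnd_of_comm_mod_jacobson_general
    (A : Type*) [AddCommGroup A]
    (htf : ∀ (n : ℕ) (a : A), 0 < n → n • a = 0 → a = 0)
    (hfr : FiniteDimensional ℚ (ℚ ⊗[ℤ] A))
    (hcomm : ∀ a b : ℚ ⊗[ℤ] AddMonoid.End A,
      a * b - b * a ∈ Ideal.jacobson (⊥ : Ideal (ℚ ⊗[ℤ] AddMonoid.End A)))
    (hsoc : rightSocle (ℚ ⊗[ℤ] AddMonoid.End A) = centerSocle (ℚ ⊗[ℤ] AddMonoid.End A))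
    (hmeet : ∀ M : AddSubgroup (ℚ ⊗[ℤ] AddMonoid.End A), IsMinimalRightIdeal M →
      ∃ x : ℚ ⊗[ℤ] AddMonoid.End A,
        x ≠ 0 ∧ x ∈ Set.center (ℚ ⊗[ℤ] AddMonoid.End A) ∧ x ∈ M) :
    IsCentrallyEssential (ℚ ⊗[ℤ] AddMonoid.End A) := by
  have : IsAddTorsionFree A := ⟨fun n hn a b hab ↦ sub_eq_zero.mp <|
    htf n _ (Nat.pos_of_ne_zero hn) (by rw [smul_sub, sub_eq_zero]; exact hab)⟩
  refine isCentrallyEssential_of_centerSocle_subset_center (K := ℚ) ?_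
  rw [← hsoc]
  exact rightSocle_subset_center hcomm hmeet

/-- for a strongly indecomposable torsion-free abelian group `A` of finite
rank with `A ≠ PSoc A`, if `ℚEnd A / J(ℚEnd A)` is commutative,
`Soc(ℚEnd A) = Soc(ℚEnd A)` over its center, and `C(ℚEnd A) ∩ M ≠ 0` for every minimal
right ideal `M` of `ℚEnd A`, then `ℚEnd A` is centrally essential. -/
theorem isCentrallyEssential_quasiEnd_of_comm_mod_jacobson
    (A : Type*) [AddCommGroup A]
    (htf : ∀ (n : ℕ) (a : A), 0 < n → n • a = 0 → a = 0)
    (hsi : StronglyIndecomposable A)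
    (hfr : FiniteDimensional ℚ (ℚ ⊗[ℤ] A))
    (hpsoc : PSoc A ≠ ⊤)
    (hcomm : ∀ a b : ℚ ⊗[ℤ] AddMonoid.End A,
      a * b - b * a ∈ Ideal.jacobson (⊥ : Ideal (ℚ ⊗[ℤ] AddMonoid.End A)))
    (hsoc : rightSocle (ℚ ⊗[ℤ] AddMonoid.End A) = centerSocle (ℚ ⊗[ℤ] AddMonoid.End A))
    (hmeet : ∀ M : AddSubgroup (ℚ ⊗[ℤ] AddMonoid.End A), IsMinimalRightIdeal M →
      ∃ x : ℚ ⊗[ℤ] AddMonoid.End A,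
        x ≠ 0 ∧ x ∈ Set.center (ℚ ⊗[ℤ] AddMonoid.End A) ∧ x ∈ M) :
    IsCentrallyEssential (ℚ ⊗[ℤ] AddMonoid.End A) :=
  isCentrallyEssential_quasiEnd_of_comm_mod_jacobson_general A htf hfr hcomm hsoc hmeet
end

section
/- Let T be the set of all 3×3 matrices over ℚ of the form [[x, y, z], [0, x, t], [0, 0, x]] with x, y, z, t ∈ ℚ. Then T is a unital subring of the ring Mat₃(ℚ) of 3×3 rational matrices, T is non-commutative, and T is not a centrally essential ring. -/
variable {R : Type*} [Ring R]

def tMatrix (x y z t : R) : Matrix (Fin 3) (Fin 3) R := !![x, y, z; 0, x, t; 0, 0, x]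

theorem tMatrix_inj {x y z t x' y' z' t' : R} :
    tMatrix x y z t = tMatrix x' y' z' t' ↔ x = x' ∧ y = y' ∧ z = z' ∧ t = t' := by
  refine ⟨fun h => ?_, fun ⟨rfl, rfl, rfl, rfl⟩ => rfl⟩
  exact ⟨congrFun (congrFun h 0) 0, congrFun (congrFun h 0) 1, congrFun (congrFun h 0) 2,
    congrFun (congrFun h 1) 2⟩

theorem tMatrix_zero : tMatrix (0 : R) 0 0 0 = 0 := by
  ext i j; fin_cases i <;> fin_cases j <;> rfl

theorem tMatrix_one : tMatrix (1 : R) 0 0 0 = 1 := by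
  rw [Matrix.one_fin_three]; rfl

theorem tMatrix_add (x y z t x' y' z' t' : R) :
    tMatrix x y z t + tMatrix x' y' z' t' = tMatrix (x + x') (y + y') (z + z') (t + t') := by
  simp [tMatrix]

theorem tMatrix_neg (x y z t : R) : -tMatrix x y z t = tMatrix (-x) (-y) (-z) (-t) := by
  simp [tMatrix]

theorem tMatrix_mul (x y z t x' y' z' t' : R) :
    tMatrix x y z t * tMatrix x' y' z' t' =
      tMatrix (x * x') (x * y' + y * x') (x * z' + y * t' + z * x') (x * t' + t * x') := by
  simp only [tMatrix, Matrix.mul_fin_three, mul_zero, zero_mul, add_zero, zero_add]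

variable (R) in
def tSubring : Subring (Matrix (Fin 3) (Fin 3) R) where
  carrier := {m | ∃ x y z t, m = tMatrix x y z t}
  zero_mem' := ⟨0, 0, 0, 0, tMatrix_zero.symm⟩
  one_mem' := ⟨1, 0, 0, 0, tMatrix_one.symm⟩
  add_mem' := by
    rintro _ _ ⟨x, y, z, t, rfl⟩ ⟨x', y', z', t', rfl⟩
    exact ⟨_, _, _, _, tMatrix_add x y z t x' y' z' t'⟩
  neg_mem' := by
    rintro _ ⟨x, y, z, t, rfl⟩
    exact ⟨_, _, _, _, tMatrix_neg x y z t⟩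
  mul_mem' := by
    rintro _ _ ⟨x, y, z, t, rfl⟩ ⟨x', y', z', t', rfl⟩
    exact ⟨_, _, _, _, tMatrix_mul x y z t x' y' z' t'⟩

namespace tSubring

def mk (x y z t : R) : tSubring R := ⟨tMatrix x y z t, x, y, z, t, rfl⟩

theorem exists_eq_mk (m : tSubring R) : ∃ x y z t, m = mk x y z t := by
  obtain ⟨m, x, y, z, t, rfl⟩ := m
  exact ⟨x, y, z, t, rfl⟩

theorem mk_inj {x y z t x' y' z' t' : R} :
    mk x y z t = mk x' y' z' t' ↔ x = x' ∧ y = y' ∧ z = z' ∧ t = t' :=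
  Subtype.ext_iff.trans tMatrix_inj

theorem mk_zero : mk (0 : R) 0 0 0 = 0 :=
  Subtype.ext tMatrix_zero

theorem mk_mul (x y z t x' y' z' t' : R) :
    mk x y z t * mk x' y' z' t' =
      mk (x * x') (x * y' + y * x') (x * z' + y * t' + z * x') (x * t' + t * x') :=
  Subtype.ext (tMatrix_mul x y z t x' y' z' t')

theorem commute_mk_zero_one_zero_zero_iff {x y z t : R} :
    Commute (mk 0 1 0 0) (mk x y z t) ↔ t = 0 := by
  simp [Commute, SemiconjBy, mk_mul, mk_inj]

theorem commute_mk_zero_zero_zero_one_iff {x y z t : R} :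
    Commute (mk 0 0 0 1) (mk x y z t) ↔ y = 0 := by
  simp [Commute, SemiconjBy, mk_mul, mk_inj, eq_comm]

theorem not_commutative [Nontrivial R] : ¬∀ a b : tSubring R, a * b = b * a := by
  intro h
  simpa [mk_mul, mk_inj] using h (mk 0 1 0 0) (mk 0 0 0 1)

theorem not_isCentrallyEssential [Nontrivial R] : ¬IsCentrallyEssential (tSubring R) := by
  intro h
  obtain ⟨c, d, hc, hd, -, hd0, rfl⟩ := h (mk 0 1 0 0) (by simp [← mk_zero, mk_inj])
  obtain ⟨x, y, z, t, rfl⟩ := exists_eq_mk c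
  have ht : t = 0 := commute_mk_zero_one_zero_zero_iff.1 (Semigroup.mem_center_iff.1 hc _)
  have hprod : mk 0 1 0 0 * mk x y z t = mk 0 x 0 0 := by simp [mk_mul, ht]
  rw [hprod] at hd hd0
  have hx : x = 0 := commute_mk_zero_zero_zero_one_iff.1 (Semigroup.mem_center_iff.1 hd _)
  exact hd0 (by rw [hx, mk_zero])

end tSubring

/-- the set of matrices `[[x, y, z], [0, x, t], [0, 0, x]]` over `ℚ` is a
unital subring of `Mat₃(ℚ)` which is non-commutative and not centrally essential. -/
theorem exists_subring_T_noncomm_not_centrallyEssential :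
    ∃ T : Subring (Matrix (Fin 3) (Fin 3) ℚ),
      (T : Set (Matrix (Fin 3) (Fin 3) ℚ)) =
        {m | ∃ x y z t : ℚ, m = !![x, y, z; 0, x, t; 0, 0, x]} ∧
      (¬∀ a b : T, a * b = b * a) ∧
      ¬IsCentrallyEssential T :=
  ⟨tSubring ℚ, rfl, tSubring.not_commutative, tSubring.not_isCentrallyEssential⟩
end

section
/- Let R = ℤ[x, y] be the polynomial ring in two variables over ℤ, and let T(R) be the set of all 3×3 matrices over R of the form [[f, ∂f/∂x, g], [0, f, ∂f/∂y], [0, 0, f]] with f, g ∈ R, where ∂/∂x and ∂/∂y are the partial derivative maps. Then T(R) is a unital subring of the ring Mat₃(R) of 3×3 matrices over R, every matrix of the form g·E₁₃ (g ∈ R, E₁₃ the matrix unit with 1 in position (1,3) and 0 elsewhere) lies in the center of T(R), and T(R) is a non-commutative centrally essential ring. -/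
/-!
For a commutative ring `A` with derivations `D₁, D₂`, the matrices
`M(f, g) = [[f, D₁ f, g], [0, f, D₂ f], [0, 0, f]]` multiply by
`M(f, g) M(f', g') = M(f f', f g' + D₁ f · D₂ f' + g f')`, so they form a subring. The matrices
`M(0, c)` are central, and the cross term `D₁ f · D₂ f'` makes the ring non-commutative as soon as
`D₁ a · D₂ b ≠ D₁ b · D₂ a` for some `a, b` (for `∂/∂x, ∂/∂y` take `a = x`, `b = y`). A nonzero
`M(f, g)` is either central (`f = 0`) or satisfies `M(f, g) · M(0, 1) = M(0, f) ≠ 0`, which makes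
the ring centrally essential.
-/

open Matrix MvPolynomial

section DerivMatrix

variable {S A : Type*} [CommSemiring S] [CommRing A] [Algebra S A] (D₁ D₂ : Derivation S A A)

def derivMatrix (f g : A) : Matrix (Fin 3) (Fin 3) A :=
  !![f, D₁ f, g; 0, f, D₂ f; 0, 0, f]

lemma derivMatrix_mul (f g f' g' : A) :
    derivMatrix D₁ D₂ f g * derivMatrix D₁ D₂ f' g' =
      derivMatrix D₁ D₂ (f * f') (f * g' + D₁ f * D₂ f' + g * f') := by
  ext i j : 2
  fin_cases i <;> fin_cases j <;>
    simp [derivMatrix, mul_apply, Fin.sum_univ_three, Derivation.leibniz, smul_eq_mul] <;> ring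

lemma derivMatrix_add (f g f' g' : A) :
    derivMatrix D₁ D₂ f g + derivMatrix D₁ D₂ f' g' = derivMatrix D₁ D₂ (f + f') (g + g') := by
  ext i j : 2
  fin_cases i <;> fin_cases j <;> simp [derivMatrix]

lemma derivMatrix_neg (f g : A) : -derivMatrix D₁ D₂ f g = derivMatrix D₁ D₂ (-f) (-g) := by
  ext i j : 2
  fin_cases i <;> fin_cases j <;> simp [derivMatrix]

lemma derivMatrix_one_zero : derivMatrix D₁ D₂ 1 0 = 1 := by
  ext i j : 2
  fin_cases i <;> fin_cases j <;> simp [derivMatrix, one_apply]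

lemma derivMatrix_zero_zero : derivMatrix D₁ D₂ 0 0 = 0 := by
  ext i j : 2
  fin_cases i <;> fin_cases j <;> simp [derivMatrix]

lemma derivMatrix_zero_eq_single (g : A) : derivMatrix D₁ D₂ 0 g = single 0 2 g := by
  ext i j : 2
  fin_cases i <;> fin_cases j <;> simp [derivMatrix, single]

lemma derivMatrix_inj {f g f' g' : A} :
    derivMatrix D₁ D₂ f g = derivMatrix D₁ D₂ f' g' ↔ f = f' ∧ g = g' := by
  refine ⟨fun h => ⟨?_, ?_⟩, fun ⟨hf, hg⟩ => hf ▸ hg ▸ rfl⟩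
  · simpa [derivMatrix] using congrFun (congrFun h 0) 0
  · simpa [derivMatrix] using congrFun (congrFun h 0) 2

lemma derivMatrix_eq_zero {f g : A} : derivMatrix D₁ D₂ f g = 0 ↔ f = 0 ∧ g = 0 := by
  rw [← derivMatrix_zero_zero D₁ D₂, derivMatrix_inj]

def derivMatrixSubring : Subring (Matrix (Fin 3) (Fin 3) A) where
  carrier := {m | ∃ f g : A, m = derivMatrix D₁ D₂ f g}
  mul_mem' := by
    rintro _ _ ⟨f, g, rfl⟩ ⟨f', g', rfl⟩
    exact ⟨_, _, derivMatrix_mul D₁ D₂ f g f' g'⟩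
  one_mem' := ⟨1, 0, (derivMatrix_one_zero D₁ D₂).symm⟩
  add_mem' := by
    rintro _ _ ⟨f, g, rfl⟩ ⟨f', g', rfl⟩
    exact ⟨_, _, derivMatrix_add D₁ D₂ f g f' g'⟩
  zero_mem' := ⟨0, 0, (derivMatrix_zero_zero D₁ D₂).symm⟩
  neg_mem' := by
    rintro _ ⟨f, g, rfl⟩
    exact ⟨_, _, derivMatrix_neg D₁ D₂ f g⟩

lemma derivMatrix_mem (f g : A) : derivMatrix D₁ D₂ f g ∈ derivMatrixSubring D₁ D₂ :=
  ⟨f, g, rfl⟩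

lemma commute_derivMatrix_zero (c : A) {m : Matrix (Fin 3) (Fin 3) A}
    (hm : m ∈ derivMatrixSubring D₁ D₂) : Commute (derivMatrix D₁ D₂ 0 c) m := by
  obtain ⟨f, g, rfl⟩ := hm
  rw [Commute, SemiconjBy, derivMatrix_mul, derivMatrix_mul, derivMatrix_inj]
  exact ⟨mul_comm 0 f, by simp only [map_zero]; ring⟩

lemma derivMatrix_zero_mem_center (c : A) :
    (⟨derivMatrix D₁ D₂ 0 c, derivMatrix_mem D₁ D₂ 0 c⟩ : derivMatrixSubring D₁ D₂) ∈
      Set.center (derivMatrixSubring D₁ D₂) :=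
  Semigroup.mem_center_iff.mpr fun m =>
    Subtype.ext (commute_derivMatrix_zero D₁ D₂ c m.2).eq.symm

lemma derivMatrixSubring_not_comm {a b : A} (hab : D₁ a * D₂ b ≠ D₁ b * D₂ a) :
    ¬∀ m n : derivMatrixSubring D₁ D₂, m * n = n * m := by
  intro h
  have hcomm := congrArg Subtype.val
    (h ⟨_, derivMatrix_mem D₁ D₂ a 0⟩ ⟨_, derivMatrix_mem D₁ D₂ b 0⟩)
  simp only [MulMemClass.coe_mul, derivMatrix_mul, derivMatrix_inj] at hcomm
  exact hab (by simpa using hcomm.2)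

theorem derivMatrixSubring_isCentrallyEssential :
    IsCentrallyEssential (derivMatrixSubring D₁ D₂) := by
  rintro ⟨_, f, g, rfl⟩ ha
  by_cases hf : f = 0
  · subst hf
    have := nontrivial_of_ne _ _ ha
    exact ⟨1, _, Set.one_mem_center, derivMatrix_zero_mem_center D₁ D₂ g,
      one_ne_zero, ha, mul_one _⟩
  · have hy : (⟨_, derivMatrix_mem D₁ D₂ 0 f⟩ : derivMatrixSubring D₁ D₂) ≠ 0 := fun h =>
      hf ((derivMatrix_eq_zero D₁ D₂).mp (congrArg Subtype.val h)).2
    have hmul : (⟨_, derivMatrix_mem D₁ D₂ f g⟩ : derivMatrixSubring D₁ D₂) *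
        ⟨_, derivMatrix_mem D₁ D₂ 0 1⟩ = ⟨_, derivMatrix_mem D₁ D₂ 0 f⟩ :=
      Subtype.ext <| by simp [derivMatrix_mul]
    refine ⟨_, _, derivMatrix_zero_mem_center D₁ D₂ 1,
      derivMatrix_zero_mem_center D₁ D₂ f, fun h => hy ?_, hy, hmul⟩
    rw [← hmul, h, mul_zero]

end DerivMatrix

/-- for `R = ℤ[x, y]`, the set `T(R)` of matrices
`[[f, ∂f/∂x, g], [0, f, ∂f/∂y], [0, 0, f]]` is a unital subring of `Mat₃(R)`, all
matrices `g·E₁₃` are central in `T(R)`, and `T(R)` is a non-commutative centrally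
essential ring. -/
theorem exists_subring_TR_centrallyEssential :
    ∃ T : Subring (Matrix (Fin 3) (Fin 3) (MvPolynomial (Fin 2) ℤ)),
      (T : Set (Matrix (Fin 3) (Fin 3) (MvPolynomial (Fin 2) ℤ))) =
        {m | ∃ f g : MvPolynomial (Fin 2) ℤ,
          m = !![f, MvPolynomial.pderiv 0 f, g;
                 0, f, MvPolynomial.pderiv 1 f;
                 0, 0, f]} ∧
      (∀ g : MvPolynomial (Fin 2) ℤ,
        Matrix.single 0 2 g ∈ T ∧
        ∀ m ∈ T, Matrix.single 0 2 g * m = m * Matrix.single 0 2 g) ∧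
      (¬∀ a b : T, a * b = b * a) ∧
      IsCentrallyEssential T := by
  let D₁ : Derivation ℤ (MvPolynomial (Fin 2) ℤ) _ := pderiv 0
  let D₂ : Derivation ℤ (MvPolynomial (Fin 2) ℤ) _ := pderiv 1
  have hcross : D₁ (X 0) * D₂ (X 1) ≠ D₁ (X 1) * D₂ (X 0) := by simp [D₁, D₂]
  refine ⟨derivMatrixSubring D₁ D₂, rfl, fun g => ?_,
    derivMatrixSubring_not_comm D₁ D₂ hcross, derivMatrixSubring_isCentrallyEssential D₁ D₂⟩
  rw [← derivMatrix_zero_eq_single D₁ D₂]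
  exact ⟨derivMatrix_mem D₁ D₂ 0 g, fun m hm => (commute_derivMatrix_zero D₁ D₂ g hm).eq⟩
end
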